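/- arXiv:1510.05279 — 3 statements merged into one kernel-verified Lean document; each statement's English description precedes it below -/
import Mathlib

section
/- Let 𝔤 be a finite-dimensional real Lie algebra and S ⊆ 𝔤 a subset whose p-hull (the smallest Lie subalgebra containing S − S and invariant under ad s for all s ∈ S) equals 𝔤. Then for any s₀ ∈ S, the Lie algebra generated by S − S together with iterated applications of ad s₀ is all of 𝔤. -/
/-- If the p-hull of S (the smallest Lie subalgebra containing S − S and invariant under
ad s for every s ∈ S) equals 𝔤, then for any s₀ ∈ S the Lie algebra generated by S − S
together with all iterated applications of ad s₀ is all of 𝔤. -/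
theorem pHull_top_iterated_ad_generates
    {𝔤 : Type*} [LieRing 𝔤] [LieAlgebra ℝ 𝔤] [FiniteDimensional ℝ 𝔤]
    (S : Set 𝔤) (s₀ : 𝔤) (hs₀ : s₀ ∈ S)
    (hp : sInf {h : LieSubalgebra ℝ 𝔤 |
        (∀ s₁ ∈ S, ∀ s₂ ∈ S, s₁ - s₂ ∈ h) ∧ ∀ s ∈ S, ∀ z ∈ h, ⁅s, z⁆ ∈ h} = ⊤) :
    LieSubalgebra.lieSpan ℝ 𝔤
      {x | ∃ (k : ℕ), ∃ s₁ ∈ S, ∃ s₂ ∈ S,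
        x = ((LieAlgebra.ad ℝ 𝔤 s₀) ^ k) (s₁ - s₂)} = ⊤ := by
  set G : Set 𝔤 := {x | ∃ (k : ℕ), ∃ s₁ ∈ S, ∃ s₂ ∈ S,
        x = ((LieAlgebra.ad ℝ 𝔤 s₀) ^ k) (s₁ - s₂)} with hG
  set K := LieSubalgebra.lieSpan ℝ 𝔤 G with hK
  -- K is invariant under ad s₀
  have hinv : ∀ z ∈ K, ⁅s₀, z⁆ ∈ K := by
    let h' : LieSubalgebra ℝ 𝔤 :=
      { carrier := {z | z ∈ K ∧ ⁅s₀, z⁆ ∈ K}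
        add_mem' := fun {a b} ha hb => by
          refine ⟨K.add_mem ha.1 hb.1, ?_⟩
          rw [lie_add]
          exact K.add_mem ha.2 hb.2
        zero_mem' := by
          refine ⟨K.zero_mem, ?_⟩
          rw [lie_zero]; exact K.zero_mem
        smul_mem' := fun c a ha => by
          refine ⟨K.smul_mem c ha.1, ?_⟩
          rw [lie_smul]
          exact K.smul_mem c ha.2
        lie_mem' := fun {a b} ha hb => by
          refine ⟨K.lie_mem ha.1 hb.1, ?_⟩
          rw [leibniz_lie]
          exact K.add_mem (K.lie_mem ha.2 hb.1) (K.lie_mem ha.1 hb.2) }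
    have hle : K ≤ h' := by
      rw [hK]
      apply LieSubalgebra.lieSpan_le.mpr
      rintro x ⟨k, s₁, hs₁, s₂, hs₂, rfl⟩
      refine ⟨LieSubalgebra.subset_lieSpan ⟨k, s₁, hs₁, s₂, hs₂, rfl⟩, ?_⟩
      have : ⁅s₀, ((LieAlgebra.ad ℝ 𝔤 s₀) ^ k) (s₁ - s₂)⁆
          = ((LieAlgebra.ad ℝ 𝔤 s₀) ^ (k + 1)) (s₁ - s₂) := by
        rw [pow_succ']
        rfl
      rw [this]
      exact LieSubalgebra.subset_lieSpan ⟨k + 1, s₁, hs₁, s₂, hs₂, rfl⟩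
    exact fun z hz => (hle hz).2
  have hsub : ∀ s₁ ∈ S, ∀ s₂ ∈ S, s₁ - s₂ ∈ K := by
    intro s₁ h1 s₂ h2
    exact LieSubalgebra.subset_lieSpan ⟨0, s₁, h1, s₂, h2, by simp⟩
  rw [eq_top_iff, ← hp]
  apply sInf_le
  refine ⟨hsub, ?_⟩
  intro s hs z hz
  have : ⁅s, z⁆ = ⁅s - s₀, z⁆ + ⁅s₀, z⁆ := by rw [← add_lie, sub_add_cancel]
  rw [this]
  exact K.add_mem (K.lie_mem (hsub s hs s₀ hs₀) hz) (hinv z hz)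
end

section
/- Let G be a Lie group with Lie algebra 𝔤, and let a : ℝ → G, y : ℝ → 𝔤* be differentiable curves satisfying the kinematic equation (a⁻¹ȧ)(t) = (∇H)(y(t)) for a smooth H : 𝔤* → ℝ. Then y satisfies the Euler–Arnold equation ẏ = ad*_{∇H(y)} y if and only if t ↦ (Ad a(t)⁻¹)* y(t) is constant. -/
/-!
Write `X = gradH (y t)` and `n = (a t)⁻¹ * m * a t`. Since `((a s)⁻¹)' = -a⁻¹ a' a⁻¹ = -X a⁻¹`,
the curve `s ↦ (a s)⁻¹ * m * a s` has derivative `n X - X n` at `t`, so the moment map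
`s ↦ y s ((a s)⁻¹ * m * a s)` has derivative `ẏ(n) - y(X n - n X)`. As `m` runs over all matrices
so does `n`, hence the moment map has vanishing derivative exactly when `y` solves the
Euler–Arnold equation, and a function on `ℝ` is constant iff its derivative vanishes.
-/

attribute [local instance] Matrix.normedAddCommGroup Matrix.normedSpace

open Filter Topology

namespace Matrix

variable {𝕜 : Type*} [NontriviallyNormedField 𝕜] {l m n : Type*} [Fintype m] [Fintype n]

theorem _root_.HasDerivAt.matrix_mul {A : 𝕜 → Matrix l m 𝕜} {B : 𝕜 → Matrix m n 𝕜}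
    {A' : Matrix l m 𝕜} {B' : Matrix m n 𝕜} {t : 𝕜}
    (hA : HasDerivAt A A' t) (hB : HasDerivAt B B' t) :
    HasDerivAt (fun s => A s * B s) (A' * B t + A t * B') t := by
  refine hasDerivAt_pi.2 fun i => hasDerivAt_pi.2 fun j => ?_
  simp only [mul_apply, add_apply, ← Finset.sum_add_distrib]
  exact HasDerivAt.fun_sum fun k _ =>
    (hasDerivAt_pi.1 (hasDerivAt_pi.1 hA i) k).mul (hasDerivAt_pi.1 (hasDerivAt_pi.1 hB k) j)

variable [DecidableEq n]

theorem _root_.HasDerivAt.matrix_inv {A : 𝕜 → Matrix n n 𝕜} {A' : Matrix n n 𝕜} {t : 𝕜}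
    (hA : HasDerivAt A A' t) (hunit : ∀ᶠ s in 𝓝 t, IsUnit (A s)) :
    HasDerivAt (fun s => (A s)⁻¹) (-((A t)⁻¹ * A' * (A t)⁻¹)) t := by
  have ht := (isUnit_iff_isUnit_det _).1 hunit.self_of_nhds
  have hinv : ContinuousAt (fun s => (A s)⁻¹) t := by
    refine (continuousAt_matrix_inv _ ?_).comp hA.continuousAt
    simpa only [Ring.inverse_eq_inv'] using continuousAt_inv₀ ht.ne_zero
  have hslope : ∀ᶠ s in 𝓝[≠] t,
      -((A s)⁻¹ * slope A t s * (A t)⁻¹) = slope (fun s => (A s)⁻¹) t s := by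
    filter_upwards [nhdsWithin_le_nhds hunit] with s hs
    simp only [slope_def_module, Matrix.mul_smul, Matrix.smul_mul, ← smul_neg]
    rw [mul_sub, sub_mul, nonsing_inv_mul _ ((isUnit_iff_isUnit_det _).1 hs),
      Matrix.mul_assoc, mul_nonsing_inv _ ht, one_mul, mul_one, neg_sub]
  refine hasDerivAt_iff_tendsto_slope.2 (Tendsto.congr' hslope ?_)
  exact (((hinv.tendsto.mono_left nhdsWithin_le_nhds).mul hA.tendsto_slope).mul_const _).neg

theorem _root_.HasDerivAt.matrix_inv_mul_mul {A : 𝕜 → Matrix n n 𝕜} {X : Matrix n n 𝕜} {t : 𝕜}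
    (hA : HasDerivAt A (A t * X) t) (hunit : ∀ᶠ s in 𝓝 t, IsUnit (A s)) (M : Matrix n n 𝕜) :
    HasDerivAt (fun s => (A s)⁻¹ * M * A s)
      ((A t)⁻¹ * M * A t * X - X * ((A t)⁻¹ * M * A t)) t := by
  have hinv : (A t)⁻¹ * (A t * X) * (A t)⁻¹ = X * (A t)⁻¹ := by
    rw [← Matrix.mul_assoc,
      nonsing_inv_mul _ ((isUnit_iff_isUnit_det _).1 hunit.self_of_nhds), Matrix.one_mul]
  convert ((hA.matrix_inv hunit).matrix_mul (hasDerivAt_const t M)).matrix_mul hA using 1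
  rw [hinv]
  noncomm_ring

theorem _root_.HasDerivAt.moment_map {A : 𝕜 → Matrix n n 𝕜} {X : Matrix n n 𝕜}
    {y : 𝕜 → (Matrix n n 𝕜 →L[𝕜] 𝕜)} {y' : Matrix n n 𝕜 →L[𝕜] 𝕜} {t : 𝕜}
    (hy : HasDerivAt y y' t) (hA : HasDerivAt A (A t * X) t)
    (hunit : ∀ᶠ s in 𝓝 t, IsUnit (A s)) (M : Matrix n n 𝕜) :
    HasDerivAt (fun s => y s ((A s)⁻¹ * M * A s))
      (y' ((A t)⁻¹ * M * A t) + y t ((A t)⁻¹ * M * A t * X - X * ((A t)⁻¹ * M * A t))) t :=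
  hy.clm_apply (hA.matrix_inv_mul_mul hunit M)

end Matrix

theorem euler_arnold_iff_moment_map_constant_general {d : ℕ}
    (gradH : (Matrix (Fin d) (Fin d) ℝ →L[ℝ] ℝ) → Matrix (Fin d) (Fin d) ℝ)
    (a : ℝ → Matrix (Fin d) (Fin d) ℝ)
    (y : ℝ → (Matrix (Fin d) (Fin d) ℝ →L[ℝ] ℝ))
    (ha : ∀ t, IsUnit (a t))
    (hy : Differentiable ℝ y)
    (hkin : ∀ t, HasDerivAt a (a t * gradH (y t)) t) :
    (∀ (t : ℝ) (m : Matrix (Fin d) (Fin d) ℝ),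
      HasDerivAt (fun s => y s m)
        (y t (gradH (y t) * m - m * gradH (y t))) t)
    ↔ (∀ (s t : ℝ) (m : Matrix (Fin d) (Fin d) ℝ),
        y s ((a s)⁻¹ * m * a s) = y t ((a t)⁻¹ * m * a t)) := by
  choose y' hy' using hy
  have hy_apply (t : ℝ) (m : Matrix (Fin d) (Fin d) ℝ) :
      HasDerivAt (fun s => y s m) (y' t 1 m) t :=
    (ContinuousLinearMap.apply ℝ ℝ m).hasFDerivAt.comp_hasDerivAt t (hy' t).hasDerivAt
  have hmoment (t : ℝ) (m : Matrix (Fin d) (Fin d) ℝ) :=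
    (hy' t).hasDerivAt.moment_map (hkin t) (.of_forall ha) m
  constructor
  · intro heuler s t m
    refine is_const_of_deriv_eq_zero (fun u => (hmoment u m).differentiableAt) (fun u => ?_) s t
    rw [(hmoment u m).deriv, (hy_apply u _).unique (heuler u _), ← map_add]
    simp
  · intro hconst t m
    have hconj : (a t)⁻¹ * (a t * m * (a t)⁻¹) * a t = m := by
      have hdet := (Matrix.isUnit_iff_isUnit_det _).1 (ha t)
      simp [Matrix.mul_assoc, Matrix.nonsing_inv_mul _ hdet,
        Matrix.nonsing_inv_mul_cancel_left _ _ hdet]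
    have hzero := (hmoment t (a t * m * (a t)⁻¹)).unique <|
      (hasDerivAt_const t (y t m)).congr_of_eventuallyEq <| .of_forall fun s => by
        simpa [hconj] using hconst s t (a t * m * (a t)⁻¹)
    rw [hconj, add_eq_zero_iff_eq_neg, ← map_neg, neg_sub] at hzero
    simpa [hzero] using hy_apply t m

/-- For a (matrix) Lie group, given the kinematic equation a⁻¹ȧ = ∇H(y(t)), the curve y
satisfies the Euler–Arnold equation ẏ = ad*_{∇H(y)} y (i.e. ẏ(m) = y(⁅∇H(y), m⁆))
if and only if the moment map t ↦ (Ad a(t)⁻¹)* y(t), i.e. m ↦ y(t)(a(t)⁻¹ m a(t)),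
is constant. -/
theorem euler_arnold_iff_moment_map_constant {d : ℕ}
    (H : (Matrix (Fin d) (Fin d) ℝ →L[ℝ] ℝ) → ℝ)
    (gradH : (Matrix (Fin d) (Fin d) ℝ →L[ℝ] ℝ) → Matrix (Fin d) (Fin d) ℝ)
    (hgrad : ∀ y ξ, ξ (gradH y) = fderiv ℝ H y ξ)
    (a : ℝ → Matrix (Fin d) (Fin d) ℝ)
    (y : ℝ → (Matrix (Fin d) (Fin d) ℝ →L[ℝ] ℝ))
    (ha : ∀ t, IsUnit (a t))
    (hy : Differentiable ℝ y)
    (hkin : ∀ t, HasDerivAt a (a t * gradH (y t)) t) :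
    (∀ (t : ℝ) (m : Matrix (Fin d) (Fin d) ℝ),
      HasDerivAt (fun s => y s m)
        (y t (gradH (y t) * m - m * gradH (y t))) t)
    ↔ (∀ (s t : ℝ) (m : Matrix (Fin d) (Fin d) ℝ),
        y s ((a s)⁻¹ * m * a s) = y t ((a t)⁻¹ * m * a t)) :=
  euler_arnold_iff_moment_map_constant_general gradH a y ha hy hkin
end

section
/- Let f(a,y) = C·exp(−βH(y)) with β = 2ν/ε² > 0, H(y) = ½|y|², on G × ℝⁿ (left-trivialized T*G for a Lie group G). Then f is a steady solution of the Fokker–Planck equation fₜ + vᵏ eₖ f + bₖ ∂f/∂yₖ + ∂/∂yₖ(−ν vₖ f − (ε²/2) ∂f/∂yᵏ) = 0, where vᵏ = ∂H/∂yₖ = yᵏ and bₖ = yₗ c^l_{jk} ∂H/∂yⱼ. (For the formal verification it suffices to show: (i) bₖ ∂f/∂yₖ = 0 using antisymmetry c^l_{jk} = −c^l_{kj}; (ii) −ν yₖ f − (ε²/2) ∂f/∂yₖ = 0; (iii) eₖ f = 0 since f is independent of a.) -/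
/-!
The Gaussian has gradient `∂f/∂yₖ = -β yₖ f`. Hence `bₖ ∂f/∂yₖ = -β f · Σ A_{jk} yⱼ yₖ` with
`A_{jk} = yₗ c^l_{jk}` antisymmetric, a quadratic form that vanishes; and the flux
`-ν yₖ f + (ε²/2) β yₖ f` vanishes because `β ε²/2 = ν`.
-/

open Finset Real

theorem sum_sum_mul_mul_eq_zero_of_antisymm {ι R : Type*} [Fintype ι] [CommRing R]
    [IsAddTorsionFree R] (A : ι → ι → R) (hA : ∀ j k, A j k = -A k j) (y : ι → R) :
    ∑ j, ∑ k, A j k * y j * y k = 0 := by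
  refine self_eq_neg.mp ?_
  conv_lhs => rw [sum_comm]
  simp only [← sum_neg_distrib]
  refine sum_congr rfl fun j _ => sum_congr rfl fun k _ => ?_
  rw [hA]; ring

theorem hasFDerivAt_sum_sq {ι : Type*} [Fintype ι] (y : ι → ℝ) :
    HasFDerivAt (fun y : ι → ℝ => ∑ i, y i ^ 2)
      (∑ i, (2 * y i) • (ContinuousLinearMap.proj i : (ι → ℝ) →L[ℝ] ℝ)) y := by
  refine HasFDerivAt.fun_sum fun i _ => ?_
  simpa using (hasFDerivAt_apply (𝕜 := ℝ) i y).pow 2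

theorem fderiv_gaussian_apply_single {ι : Type*} [Fintype ι] [DecidableEq ι] (C β : ℝ)
    (y : ι → ℝ) (k : ι) :
    fderiv ℝ (fun y : ι → ℝ => C * exp (-β * (∑ i, y i ^ 2) / 2)) y (Pi.single k 1) =
      -β * y k * (C * exp (-β * (∑ i, y i ^ 2) / 2)) := by
  have h := (((hasFDerivAt_sum_sq y).const_mul (-β)).mul_const 2⁻¹).exp.const_mul C
  simp only [← div_eq_mul_inv] at h
  rw [h.fderiv]
  simp only [smul_apply, _root_.sum_apply,
    ContinuousLinearMap.proj_apply, Pi.single_apply, smul_eq_mul, mul_ite, mul_one, mul_zero,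
    sum_ite_eq', mem_univ, if_true]
  ring

theorem fokker_planck_steady_solution_general {n : ℕ}
    (c : Fin n → Fin n → Fin n → ℝ)
    (hc : ∀ l j k, c l j k = - c l k j)
    (ν ε Cst : ℝ) (hε : 0 < ε) (β : ℝ) (hβ : β = 2 * ν / ε ^ 2)
    (f : (Fin n → ℝ) → ℝ)
    (hf : ∀ y, f y = Cst * Real.exp (-β * (∑ i, y i ^ 2) / 2)) :
    (∀ y : Fin n → ℝ,
      ∑ k, (∑ j, ∑ l, y l * c l j k * y j) * fderiv ℝ f y (Pi.single k 1) = 0) ∧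
    (∀ (y : Fin n → ℝ) (k : Fin n),
      -ν * y k * f y - ε ^ 2 / 2 * fderiv ℝ f y (Pi.single k 1) = 0) := by
  have hpartial (y : Fin n → ℝ) (k : Fin n) :
      fderiv ℝ f y (Pi.single k 1) = -β * y k * f y := by
    rw [funext hf, fderiv_gaussian_apply_single]
  refine ⟨fun y => ?_, fun y k => ?_⟩
  · have hquad := sum_sum_mul_mul_eq_zero_of_antisymm (fun j k => ∑ l, y l * c l j k)
      (fun j k => by simp only [hc _ j k, mul_neg, sum_neg_distrib]) y
    calc ∑ k, (∑ j, ∑ l, y l * c l j k * y j) * fderiv ℝ f y (Pi.single k 1)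
        = -β * f y * ∑ j, ∑ k, (∑ l, y l * c l j k) * y j * y k := by
          simp only [hpartial, mul_sum, sum_mul]
          rw [sum_comm]
          exact sum_congr rfl fun j _ => sum_congr rfl fun k _ => sum_congr rfl fun l _ => by ring
      _ = 0 := by rw [hquad, mul_zero]
  · rw [hpartial, hβ]
    field_simp
    ring

/-- f(y) = C exp(−β|y|²/2) with β = 2ν/ε² is a steady solution of the Fokker–Planck
equation: (i) bₖ ∂f/∂yₖ = 0 where bₖ = yₗ c^l_{jk} yⱼ (using antisymmetry of c in the
lower indices); (ii) −ν yₖ f − (ε²/2) ∂f/∂yₖ = 0.  (f is independent of the group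
variable a by construction, so eₖ f = 0.) -/
theorem fokker_planck_steady_solution {n : ℕ}
    (c : Fin n → Fin n → Fin n → ℝ)
    (hc : ∀ l j k, c l j k = - c l k j)
    (ν ε Cst : ℝ) (hν : 0 < ν) (hε : 0 < ε) (β : ℝ) (hβ : β = 2 * ν / ε ^ 2)
    (f : (Fin n → ℝ) → ℝ)
    (hf : ∀ y, f y = Cst * Real.exp (-β * (∑ i, y i ^ 2) / 2)) :
    (∀ y : Fin n → ℝ,
      ∑ k, (∑ j, ∑ l, y l * c l j k * y j) * fderiv ℝ f y (Pi.single k 1) = 0) ∧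
    (∀ (y : Fin n → ℝ) (k : Fin n),
      -ν * y k * f y - ε ^ 2 / 2 * fderiv ℝ f y (Pi.single k 1) = 0) :=
  fokker_planck_steady_solution_general c hc ν ε Cst hε β hβ f hf
end
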